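/- Let k ∈ ℕ, let M ∈ 𝔽₂^{k×k} be skew-symmetric, and let w ∈ 𝔽₂^k. Define u_{M,w} ∈ ℝ^{𝔽₂^k} by u_{M,w}(x) := 2^{−k/2}·(−1)^{Q_M(x)+wᵀx}. Then for every p ∈ 𝔽₂^k, the vector u_{M,w} satisfies the eigenvector equation (−1)^{Q_M(p)+wᵀp}·X_p Z_{Mp} u_{M,w} = u_{M,w}. -/

import Mathlib

/-!
Write `Q_M(x) = xᵀ N x` with `N` the strictly upper-triangular part of `M`; for skew-symmetric `M`
one has `N + Nᵀ = M`, so `Q_M` polarizes to `Q_M(x + p) = Q_M(x) + Q_M(p) + xᵀ M p`, and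
`pᵀ M p = 2 pᵀ N p = 0`. Hence the sign picked up by `u_{M,w}` under the shift `x ↦ x + p` is
`(−1)^{Q_M(p) + wᵀp + (Mp)ᵀx}`, which the phase `(−1)^{Q_M(p)+wᵀp}` and the modulation `Z_{Mp}`
cancel exactly.
-/

open Matrix

/-- The quadratic form `Q_M(x) = xᵀ M̃ x` where `M̃` is the strictly upper-triangular
part of `M`. -/
def Qform (k : ℕ) (M : Matrix (Fin k) (Fin k) (ZMod 2)) (x : Fin k → ZMod 2) : ZMod 2 :=
  x ⬝ᵥ (Matrix.of fun i j : Fin k => if (i : ℕ) < (j : ℕ) then M i j else 0).mulVec x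

/-- The translation operator `(X_p f)(x) = f(x + p)` on `ℝ^{𝔽₂^k}`. -/
def Xop (k : ℕ) (p : Fin k → ZMod 2) (f : (Fin k → ZMod 2) → ℝ) :
    (Fin k → ZMod 2) → ℝ :=
  fun x => f (x + p)

/-- The modulation operator `(Z_q f)(x) = (−1)^{qᵀx}·f(x)` on `ℝ^{𝔽₂^k}`. -/
def Zop (k : ℕ) (q : Fin k → ZMod 2) (f : (Fin k → ZMod 2) → ℝ) :
    (Fin k → ZMod 2) → ℝ :=
  fun x => (-1 : ℝ) ^ (q ⬝ᵥ x).val * f x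

/-- The vector `u_{M,w} ∈ ℝ^{𝔽₂^k}` with `u_{M,w}(x) = 2^{−k/2}·(−1)^{Q_M(x)+wᵀx}`. -/
noncomputable def kerdockVec (k : ℕ) (M : Matrix (Fin k) (Fin k) (ZMod 2))
    (w : Fin k → ZMod 2) (x : Fin k → ZMod 2) : ℝ :=
  ((Real.sqrt 2)⁻¹) ^ k * (-1 : ℝ) ^ (Qform k M x + w ⬝ᵥ x).val

section Polarization

variable {n R : Type*} [Fintype n] [CommRing R]

theorem add_dotProduct_mulVec_add (N : Matrix n n R) (x p : n → R) :
    (x + p) ⬝ᵥ N *ᵥ (x + p) = x ⬝ᵥ N *ᵥ x + p ⬝ᵥ N *ᵥ p + x ⬝ᵥ (N + Nᵀ) *ᵥ p := by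
  have hswap : p ⬝ᵥ N *ᵥ x = x ⬝ᵥ Nᵀ *ᵥ p := by
    rw [dotProduct_mulVec, ← mulVec_transpose, dotProduct_comm]
  rw [mulVec_add, add_dotProduct, dotProduct_add, dotProduct_add, hswap, add_mulVec,
    dotProduct_add]
  ring

theorem dotProduct_add_transpose_mulVec_self [CharP R 2] (N : Matrix n n R) (p : n → R) :
    p ⬝ᵥ (N + Nᵀ) *ᵥ p = 0 := by
  rw [add_mulVec, dotProduct_add, dotProduct_mulVec p Nᵀ, vecMul_transpose,
    dotProduct_comm (N *ᵥ p), CharTwo.add_self_eq_zero]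

end Polarization

theorem neg_one_pow_val_add (a b : ZMod 2) :
    (-1 : ℝ) ^ (a + b).val = (-1 : ℝ) ^ a.val * (-1 : ℝ) ^ b.val := by
  rw [ZMod.val_add, ← neg_one_pow_eq_pow_mod_two, pow_add]

-- `Qform k M x` is definitionally `x ⬝ᵥ strictUpper M *ᵥ x`.
def strictUpper {k : ℕ} {R : Type*} [Zero R] (M : Matrix (Fin k) (Fin k) R) :
    Matrix (Fin k) (Fin k) R :=
  Matrix.of fun i j => if (i : ℕ) < (j : ℕ) then M i j else 0

theorem strictUpper_add_transpose {k : ℕ} {R : Type*} [AddZeroClass R]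
    {M : Matrix (Fin k) (Fin k) R} (hdiag : ∀ i, M i i = 0) (hsym : ∀ i j, M i j = M j i) :
    strictUpper M + (strictUpper M)ᵀ = M := by
  ext i j
  simp only [strictUpper, Matrix.add_apply, transpose_apply, of_apply]
  rcases lt_trichotomy (i : ℕ) j with h | h | h
  · simp [h, h.not_gt]
  · obtain rfl := Fin.ext h
    simp [hdiag]
  · simp [h, h.not_gt, hsym i j]

section Skew

variable {k : ℕ} {M : Matrix (Fin k) (Fin k) (ZMod 2)}

theorem Qform_add (hdiag : ∀ i, M i i = 0) (hsym : ∀ i j, M i j = M j i) (x p : Fin k → ZMod 2) :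
    Qform k M (x + p) = Qform k M x + Qform k M p + x ⬝ᵥ M *ᵥ p := by
  have := add_dotProduct_mulVec_add (strictUpper M) x p
  rwa [strictUpper_add_transpose hdiag hsym] at this

theorem dotProduct_mulVec_self_eq_zero (hdiag : ∀ i, M i i = 0) (hsym : ∀ i j, M i j = M j i)
    (p : Fin k → ZMod 2) : p ⬝ᵥ M *ᵥ p = 0 := by
  rw [← strictUpper_add_transpose hdiag hsym]
  exact dotProduct_add_transpose_mulVec_self _ p

end Skew

/-- For skew-symmetric `M ∈ 𝔽₂^{k×k}` and `w, p ∈ 𝔽₂^k`, the vector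
`u_{M,w}` satisfies the eigenvector equation
`(−1)^{Q_M(p)+wᵀp}·X_p Z_{Mp} u_{M,w} = u_{M,w}`. -/
theorem stmt_13 (k : ℕ) (M : Matrix (Fin k) (Fin k) (ZMod 2))
    (hdiag : ∀ i, M i i = 0) (hsym : ∀ i j, M i j = M j i)
    (w : Fin k → ZMod 2) :
    ∀ p : Fin k → ZMod 2,
      (fun x => (-1 : ℝ) ^ (Qform k M p + w ⬝ᵥ p).val *
          Xop k p (Zop k (M.mulVec p) (kerdockVec k M w)) x)
        = kerdockVec k M w := by
  intro p
  funext x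
  have hphase : Qform k M p + w ⬝ᵥ p + M *ᵥ p ⬝ᵥ (x + p) + (Qform k M (x + p) + w ⬝ᵥ (x + p))
      = Qform k M x + w ⬝ᵥ x := by
    rw [Qform_add hdiag hsym, dotProduct_add, dotProduct_add, dotProduct_comm (M *ᵥ p) p,
      dotProduct_mulVec_self_eq_zero hdiag hsym, dotProduct_comm (M *ᵥ p) x]
    grind
  simp only [Xop, Zop, kerdockVec]
  rw [← hphase]
  simp only [neg_one_pow_val_add]
  ring
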